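/- arXiv:1609.07679 — 4 statements merged into one kernel-verified Lean document; each statement's English description precedes it below -/
import Mathlib

section
/- Let z be a unit vector in C^n that is (δ,ρ)-incompressible, meaning its real representation hat(z) in R^{2n} is at distance more than ρ (in Euclidean norm) from every vector of R^{2n} with support of size at most 2δn. Then there exist constants ν_1, ν_2, ν_3 > 0 depending only on δ and ρ, and a set σ ⊆ {1,...,2n} with |σ| ≥ ν_1 n, such that ν_2/√n ≤ |hat(z)_k| ≤ ν_3/√n for all k in σ. -/
/-!
Write `x = hat(z)`, so `∑ x_k² = 1`, and let `M = 1/√(2δn)`, `m = ρ/(2√n)`. By Chebyshev, at most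
`2δn` coordinates have `|x_k| > M`; zeroing them gives a sparse vector, so incompressibility leaves
mass `> ρ²` on the coordinates with `|x_k| ≤ M`. Those with `|x_k| < m` carry at most
`2n · m² = ρ²/2` of it, so the spread set `{m ≤ |x_k| ≤ M}` carries more than `ρ²/2`, which forces
it to have more than `ρ²/2 / M² = δρ²n` elements.
-/

open Finset

noncomputable def hatv {n : ℕ} (a : Fin n → ℂ) : Fin n ⊕ Fin n → ℝ :=
  Sum.elim (fun j => (a j).re) (fun j => (a j).im)

/-- `z` on the complex unit sphere is `(δ,ρ)`-incompressible: `hat(z)` is at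
Euclidean distance more than `ρ` from every vector of support at most `2δn`. -/
def Incompressible {n : ℕ} (δ ρ : ℝ) (z : Fin n → ℂ) : Prop :=
  ∀ y : Fin n ⊕ Fin n → ℝ,
    ((Finset.univ.filter (fun k => y k ≠ 0)).card : ℝ) ≤ 2 * δ * n →
    ρ < Real.sqrt (∑ k, (hatv z k - y k) ^ 2)

section

variable {ι : Type*}

theorem sum_sq_le_card_mul_sq_of_abs_le (x : ι → ℝ) {s : Finset ι} {a : ℝ}
    (h : ∀ k ∈ s, |x k| ≤ a) : ∑ k ∈ s, x k ^ 2 ≤ #s * a ^ 2 := by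
  rw [← nsmul_eq_mul]
  refine sum_le_card_nsmul _ _ _ fun k hk => ?_
  rw [← sq_abs (x k)]
  exact pow_le_pow_left₀ (abs_nonneg _) (h k hk) 2

variable [Fintype ι]

theorem card_filter_lt_abs_mul_sq_le_sum_sq (x : ι → ℝ) {M : ℝ} (hM : 0 ≤ M) :
    #{k | M < |x k|} * M ^ 2 ≤ ∑ k, x k ^ 2 :=
  calc (#{k | M < |x k|} : ℝ) * M ^ 2 ≤ ∑ k with M < |x k|, x k ^ 2 := by
        rw [← nsmul_eq_mul]
        refine card_nsmul_le_sum _ _ _ fun k hk => ?_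
        rw [← sq_abs (x k)]
        exact pow_le_pow_left₀ hM (mem_filter.mp hk).2.le 2
    _ ≤ ∑ k, x k ^ 2 :=
        sum_le_sum_of_subset_of_nonneg (subset_univ _) fun k _ _ => sq_nonneg _

theorem sum_sq_filter_abs_le_le (x : ι → ℝ) (m M : ℝ) :
    ∑ k with |x k| ≤ M, x k ^ 2 ≤
      #{k | m ≤ |x k| ∧ |x k| ≤ M} * M ^ 2 + Fintype.card ι * m ^ 2 := by
  have hσ : ({k | |x k| ≤ M} : Finset ι).filter (fun k => m ≤ |x k|) =
      ({k | m ≤ |x k| ∧ |x k| ≤ M} : Finset ι) := by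
    rw [filter_filter]
    exact filter_congr fun _ _ => and_comm
  rw [← sum_filter_add_sum_filter_not _ (fun k => m ≤ |x k|), hσ]
  gcongr
  · exact sum_sq_le_card_mul_sq_of_abs_le x fun k hk => (mem_filter.mp hk).2.2
  · calc _ ≤ (#{k ∈ {k | |x k| ≤ M} | ¬m ≤ |x k|} : ℝ) * m ^ 2 :=
          sum_sq_le_card_mul_sq_of_abs_le x fun k hk => (not_le.mp (mem_filter.mp hk).2).le
      _ ≤ Fintype.card ι * m ^ 2 := by
          gcongr
          exact card_le_univ _

end

theorem sum_sq_hatv {n : ℕ} (z : Fin n → ℂ) : ∑ k, hatv z k ^ 2 = ∑ j, ‖z j‖ ^ 2 := by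
  simp only [Fintype.sum_sum_type, hatv, Sum.elim_inl, Sum.elim_inr, ← sum_add_distrib,
    Complex.sq_norm, Complex.normSq_apply]
  ring_nf

theorem Incompressible.sq_lt_sum_sq_filter_not {n : ℕ} {δ ρ : ℝ} {z : Fin n → ℂ}
    (hz : Incompressible δ ρ z) (hρ : 0 ≤ ρ) (p : Fin n ⊕ Fin n → Prop) [DecidablePred p]
    (hp : (#{k | p k} : ℝ) ≤ 2 * δ * n) : ρ ^ 2 < ∑ k with ¬p k, hatv z k ^ 2 := by
  let y : Fin n ⊕ Fin n → ℝ := fun k => if p k then hatv z k else 0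
  have hy : ((univ.filter fun k => y k ≠ 0).card : ℝ) ≤ 2 * δ * n := by
    refine le_trans ?_ hp
    gcongr with k
    exact fun hk => by_contra fun hpk => hk (if_neg hpk)
  have hdist : ∑ k, (hatv z k - y k) ^ 2 = ∑ k with ¬p k, hatv z k ^ 2 := by
    rw [sum_filter]
    refine sum_congr rfl fun k _ => ?_
    by_cases hk : p k <;> simp [y, hk]
  rw [← hdist, ← Real.lt_sqrt hρ]
  exact hz y hy

/-- spread lemma: every `(δ,ρ)`-incompressible unit vector has a
spread set `σ` of at least `ν₁ n` coordinates with `ν₂/√n ≤ |hat(z)_k| ≤ ν₃/√n`. -/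
theorem stmt4 (δ ρ : ℝ) (hδ : δ ∈ Set.Ioo (0:ℝ) 1) (hρ : ρ ∈ Set.Ioo (0:ℝ) 1) :
    ∃ ν₁ ν₂ ν₃ : ℝ, 0 < ν₁ ∧ 0 < ν₂ ∧ 0 < ν₃ ∧
      ∀ n : ℕ, ∀ z : Fin n → ℂ,
        Real.sqrt (∑ j, ‖z j‖ ^ 2) = 1 →
        Incompressible δ ρ z →
        ∃ σ : Finset (Fin n ⊕ Fin n), ν₁ * n ≤ (σ.card : ℝ) ∧
          ∀ k ∈ σ, ν₂ / Real.sqrt n ≤ |hatv z k| ∧ |hatv z k| ≤ ν₃ / Real.sqrt n := by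
  obtain ⟨hδ0, -⟩ := hδ
  obtain ⟨hρ0, -⟩ := hρ
  refine ⟨δ * ρ ^ 2, ρ / 2, 1 / Real.sqrt (2 * δ), by positivity, by positivity, by positivity,
    fun n z hz hinc => ?_⟩
  rcases Nat.eq_zero_or_pos n with rfl | hn
  · exact ⟨∅, by simp, by simp⟩
  set x := hatv z
  set M := 1 / Real.sqrt (2 * δ) / Real.sqrt n
  set m := ρ / 2 / Real.sqrt n
  have hx : ∑ k, x k ^ 2 = 1 := by
    rw [sum_sq_hatv, ← Real.sqrt_eq_one, hz]
  have hM : M ^ 2 = 1 / (2 * δ * n) := by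
    rw [div_pow, div_pow, Real.sq_sqrt (by positivity), Real.sq_sqrt (by positivity)]
    field_simp
  have hm : m ^ 2 = ρ ^ 2 / (4 * n) := by
    rw [div_pow, Real.sq_sqrt (by positivity)]
    ring
  have hlarge : (#{k | M < |x k|} : ℝ) ≤ 2 * δ * n := by
    have := card_filter_lt_abs_mul_sq_le_sum_sq x (M := M) (by positivity)
    rw [hM, hx, mul_one_div, div_le_one (by positivity)] at this
    exact this
  have hmass := hinc.sq_lt_sum_sq_filter_not hρ0.le _ hlarge
  simp only [not_lt] at hmass
  have hsplit := sum_sq_filter_abs_le_le x m M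
  simp only [Fintype.card_sum, Fintype.card_fin, hM, hm] at hsplit
  set σ : Finset (Fin n ⊕ Fin n) := {k | m ≤ |x k| ∧ |x k| ≤ M}
  refine ⟨σ, ?_, fun k hk => (mem_filter.mp hk).2⟩
  have hsmall : ((n + n : ℕ) : ℝ) * (ρ ^ 2 / (4 * n)) = ρ ^ 2 / 2 := by
    push_cast
    field_simp
    ring
  have key : ρ ^ 2 / 2 < #σ / (2 * δ * n) := by
    rw [hsmall, mul_one_div] at hsplit
    linarith
  rw [lt_div_iff₀ (by positivity)] at key
  linarith
end

section
/- Let v be a unit vector in C^n and suppose there exist θ in R^2 and p in Z^{2n} with ||[v]^T θ - p||_2 < γ ||θ||_2 and ||θ||_2 < λ√n. If v is (δ,ρ)-incompressible, then for suitable constants γ, λ > 0 depending only on δ and ρ, this leads to a contradiction; equivalently, every incompressible unit vector v in C^n satisfies LCD_{α,γ}(v) ≥ λ√n for every α > 0. -/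
open Finset Matrix

set_option maxHeartbeats 1000000

noncomputable def vmat {n : ℕ} (v : Fin n → ℂ) : Matrix (Fin 2) (Fin n ⊕ Fin n) ℝ :=
  Matrix.of fun i => Sum.elim
    (fun j => if i = 0 then (v j).re else (v j).im)
    (fun j => if i = 0 then -(v j).im else (v j).re)

/-- lower bound on LCD: there are constants `γ, λ > 0` depending
only on `δ, ρ` such that every incompressible unit vector `v ∈ ℂⁿ` satisfies
`LCD_{α,γ}(v) ≥ λ√n` for every `α > 0`; i.e. every `θ ∈ ℝ²` admitting an
approximation `‖[v]ᵀθ - p‖₂ < min(γ‖θ‖₂, α)` with `p ∈ ℤ^{2n}` has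
`‖θ‖₂ ≥ λ√n`. -/
theorem stmt5 (δ ρ : ℝ) (hδ : δ ∈ Set.Ioo (0:ℝ) 1) (hρ : ρ ∈ Set.Ioo (0:ℝ) 1) :
    ∃ γ lam : ℝ, 0 < γ ∧ γ < 1 ∧ 0 < lam ∧
      ∀ n : ℕ, ∀ v : Fin n → ℂ,
        Real.sqrt (∑ j, ‖v j‖ ^ 2) = 1 →
        Incompressible δ ρ v →
        ∀ α : ℝ, 0 < α →
        ∀ θ : Fin 2 → ℝ, ∀ p : Fin n ⊕ Fin n → ℤ,
          Real.sqrt (∑ k, ((vmat v)ᵀ.mulVec θ k - (p k : ℝ)) ^ 2) <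
            min (γ * Real.sqrt (∑ i, θ i ^ 2)) α →
          lam * Real.sqrt n ≤ Real.sqrt (∑ i, θ i ^ 2) := by
  obtain ⟨hδ0, hδ1⟩ := hδ
  obtain ⟨hρ0, hρ1⟩ := hρ
  refine ⟨ρ/2, Real.sqrt δ / 2, by linarith, by linarith, by positivity, ?_⟩
  intro n v hv hinc α hα θ p hlt
  by_contra hcon
  push_neg at hcon
  set M : Fin n ⊕ Fin n → ℝ := (vmat v)ᵀ.mulVec θ with hM
  set T : ℝ := θ 0 ^ 2 + θ 1 ^ 2 with hT
  have hTsum : ∑ i, θ i ^ 2 = T := by rw [Fin.sum_univ_two]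
  rw [hTsum] at hlt hcon
  set D : ℝ := ∑ k, (M k - (p k : ℝ)) ^ 2 with hD_def
  have hD0 : (0:ℝ) ≤ D := Finset.sum_nonneg fun k _ => sq_nonneg _
  have hlt1 : Real.sqrt D < ρ/2 * Real.sqrt T :=
    lt_of_lt_of_le hlt (min_le_left _ _)
  have hsT : 0 < Real.sqrt T := by
    nlinarith [Real.sqrt_nonneg D, Real.sqrt_nonneg T]
  have hT0 : 0 < T := Real.sqrt_pos.mp hsT
  have hD : D < (ρ/2)^2 * T := by
    nlinarith [Real.sq_sqrt hD0, Real.sq_sqrt hT0.le, Real.sqrt_nonneg D]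
  -- explicit form of M
  have hM1 : ∀ j, M (Sum.inl j) = θ 0 * (v j).re + θ 1 * (v j).im := by
    intro j
    simp [hM, Matrix.mulVec, dotProduct, Fin.sum_univ_two, vmat]
    ring
  have hM2 : ∀ j, M (Sum.inr j) = θ 0 * (-(v j).im) + θ 1 * (v j).re := by
    intro j
    simp [hM, Matrix.mulVec, dotProduct, Fin.sum_univ_two, vmat]
    ring
  -- v is a unit vector
  have hvnorm : ∑ j, ((v j).re ^ 2 + (v j).im ^ 2) = 1 := by
    have h1 : ∑ j, ‖v j‖ ^ 2 = 1 := Real.sqrt_eq_one.mp hv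
    rw [← h1]
    refine Finset.sum_congr rfl fun j _ => ?_
    rw [Complex.sq_norm, Complex.normSq_apply]; ring
  have hMnorm : ∑ k, M k ^ 2 = T := by
    rw [Fintype.sum_sum_type, ← Finset.sum_add_distrib]
    have hterm : ∀ j ∈ univ, M (Sum.inl j) ^ 2 + M (Sum.inr j) ^ 2
        = T * ((v j).re ^ 2 + (v j).im ^ 2) := by
      intro j _; rw [hM1, hM2, hT]; ring
    rw [Finset.sum_congr rfl hterm, ← Finset.mul_sum, hvnorm, mul_one]
  have hp2 : ∑ k, ((p k : ℝ)) ^ 2 ≤ 2 * D + 2 * T := by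
    have step : ∑ k, ((p k : ℝ)) ^ 2
        ≤ ∑ k, (2 * (M k - (p k : ℝ)) ^ 2 + 2 * (M k) ^ 2) :=
      Finset.sum_le_sum fun k _ => by nlinarith [sq_nonneg (2 * M k - (p k : ℝ))]
    calc ∑ k, ((p k : ℝ)) ^ 2 ≤ _ := step
      _ = 2 * D + 2 * T := by
        rw [Finset.sum_add_distrib, ← Finset.mul_sum, ← Finset.mul_sum, hMnorm]
  -- the sparse approximant
  set y : Fin n ⊕ Fin n → ℝ := Sum.elim
    (fun j => (θ 0 * (p (Sum.inl j) : ℝ) + θ 1 * (p (Sum.inr j) : ℝ)) / T)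
    (fun j => (θ 1 * (p (Sum.inl j) : ℝ) - θ 0 * (p (Sum.inr j) : ℝ)) / T) with hy
  have hcard : ((univ.filter fun k => y k ≠ 0).card : ℝ) ≤ 2 * ∑ k, ((p k : ℝ)) ^ 2 := by
    have h1 : ((univ.filter fun k => y k ≠ 0).card : ℝ)
        = ∑ k, (if y k ≠ 0 then (1:ℝ) else 0) := by
      rw [Finset.card_filter, Nat.cast_sum]
      exact Finset.sum_congr rfl fun k _ => by split <;> simp
    rw [h1, Fintype.sum_sum_type, Fintype.sum_sum_type (fun k => ((p k : ℝ)) ^ 2),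
      ← Finset.sum_add_distrib, ← Finset.sum_add_distrib, Finset.mul_sum]
    refine Finset.sum_le_sum fun j _ => ?_
    by_cases h : p (Sum.inl j) = 0 ∧ p (Sum.inr j) = 0
    · simp [hy, h.1, h.2]
    · have hge : (1:ℝ) ≤ ((p (Sum.inl j) : ℝ)) ^ 2 + ((p (Sum.inr j) : ℝ)) ^ 2 := by
        rcases not_and_or.mp h with h' | h'
        · have h1 : (1:ℝ) ≤ |((p (Sum.inl j) : ℝ))| := by
            rw [← Int.cast_abs]; exact_mod_cast Int.one_le_abs h'
          nlinarith [sq_nonneg ((p (Sum.inr j) : ℝ)), sq_abs ((p (Sum.inl j) : ℝ))]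
        · have h1 : (1:ℝ) ≤ |((p (Sum.inr j) : ℝ))| := by
            rw [← Int.cast_abs]; exact_mod_cast Int.one_le_abs h'
          nlinarith [sq_nonneg ((p (Sum.inl j) : ℝ)), sq_abs ((p (Sum.inr j) : ℝ))]
      have l1 : (if y (Sum.inl j) ≠ 0 then (1:ℝ) else 0) ≤ 1 := by split <;> norm_num
      have l2 : (if y (Sum.inr j) ≠ 0 then (1:ℝ) else 0) ≤ 1 := by split <;> norm_num
      linarith
  -- T is small
  have hTn : T < δ / 4 * n := by
    have h2 : Real.sqrt T ^ 2 < (Real.sqrt δ / 2 * Real.sqrt n) ^ 2 :=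
      pow_lt_pow_left₀ hcon (Real.sqrt_nonneg T) two_ne_zero
    rw [Real.sq_sqrt hT0.le] at h2
    have h3 : (Real.sqrt δ / 2 * Real.sqrt n) ^ 2 = δ / 4 * n := by
      rw [mul_pow, div_pow, Real.sq_sqrt hδ0.le, Real.sq_sqrt (Nat.cast_nonneg n)]
      norm_num
    linarith [h3 ▸ h2]
  have hcard2 : ((univ.filter fun k => y k ≠ 0).card : ℝ) ≤ 2 * δ * n := by
    have h4 : (ρ/2)^2 < 1 := by nlinarith
    have h5 : (ρ/2)^2 * T < 1 * T := mul_lt_mul_of_pos_right h4 hT0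
    rw [one_mul] at h5
    linarith
  have hfar := hinc y hcard2
  have hsum_y : ∑ k, (hatv v k - y k) ^ 2 = D / T := by
    rw [hD_def, Fintype.sum_sum_type, Fintype.sum_sum_type (fun k => (M k - (p k : ℝ)) ^ 2),
      ← Finset.sum_add_distrib, ← Finset.sum_add_distrib, Finset.sum_div]
    refine Finset.sum_congr rfl fun j _ => ?_
    rw [hM1, hM2]
    simp only [hy, hatv, Sum.elim_inl, Sum.elim_inr]
    field_simp
    rw [hT]
    ring
  have hlast : Real.sqrt (∑ k, (hatv v k - y k) ^ 2) < ρ / 2 := by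
    rw [hsum_y, Real.sqrt_lt' (by linarith : (0:ℝ) < ρ / 2), div_lt_iff₀ hT0]
    linarith
  linarith
end

section
/- Let ξ_1,...,ξ_m be independent nonnegative random variables and suppose there exist constants C, ε_0 > 0 such that P(ξ_j < ε) ≤ C ε² for all ε ≥ ε_0 and all j. Then there is a constant C' depending only on C such that P(∑_{j=1}^m ξ_j² < ε² m) ≤ (C' ε)^{2m} for all ε ≥ ε_0. -/
/-!
Chernoff's bound for the lower tail of `∑ ξ_j² / ε²`, taken at parameter `-1`, gives
`P(∑ ξ_j² < ε² m) ≤ e^m ∏ E[exp(-ξ_j²/ε²)]`. Splitting according to which interval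
`[k, k + 1)` contains `ξ_j²/ε²` and applying the small-ball bound at `ε √(k+1) ≥ ε₀` gives
`E[exp(-ξ_j²/ε²)] ≤ C ε² ∑ (k+1) e^{-k} ≤ 4 C ε²`, so one can take `C' = √(4 e C)`.
-/

open Finset MeasureTheory ProbabilityTheory Real

lemma hasSum_add_one_mul_exp_neg :
    HasSum (fun k : ℕ => ((k : ℝ) + 1) * exp (-k)) (1 / (1 - exp (-1)) ^ 2) := by
  have hr : ‖exp (-1)‖ < 1 := by
    rw [Real.norm_of_nonneg (exp_nonneg _)]; exact exp_lt_one_iff.2 (by norm_num)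
  have h := hasSum_choose_mul_geometric_of_norm_lt_one 1 hr
  simp only [Nat.choose_one_right, Nat.cast_add, Nat.cast_one, ← exp_nat_mul, mul_neg_one] at h
  exact h

lemma tsum_add_one_mul_exp_neg_le : ∑' k : ℕ, ((k : ℝ) + 1) * exp (-k) ≤ 4 := by
  have he : exp (-1) ≤ 1 / 2 := by
    rw [exp_neg, inv_le_comm₀ (exp_pos 1) (by norm_num)]; linarith [exp_one_gt_two]
  rw [hasSum_add_one_mul_exp_neg.tsum_eq, div_le_iff₀ (by nlinarith)]
  nlinarith

variable {Ω : Type*} [MeasurableSpace Ω] {μ : Measure Ω}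

lemma lintegral_exp_neg_le_tsum_measure_lt {g : Ω → ℝ} (hg : Measurable g)
    (hg0 : ∀ ω, 0 ≤ g ω) :
    ∫⁻ ω, ENNReal.ofReal (exp (-g ω)) ∂μ
      ≤ ∑' k : ℕ, ENNReal.ofReal (exp (-k)) * μ {ω | g ω < k + 1} := by
  set s : ℕ → Set Ω := fun k => {ω | g ω < k + 1}
  have hs : ∀ k, MeasurableSet (s k) := fun k => measurableSet_lt hg measurable_const
  have hle : ∀ ω, ENNReal.ofReal (exp (-g ω))
      ≤ ∑' k : ℕ, (s k).indicator (fun _ => ENNReal.ofReal (exp (-k))) ω := fun ω =>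
    calc ENNReal.ofReal (exp (-g ω))
        ≤ (s ⌊g ω⌋₊).indicator (fun _ => ENNReal.ofReal (exp (-⌊g ω⌋₊))) ω := by
          rw [Set.indicator_of_mem (show ω ∈ s ⌊g ω⌋₊ from Nat.lt_floor_add_one (g ω))]
          gcongr
          exact Nat.floor_le (hg0 ω)
      _ ≤ ∑' k : ℕ, (s k).indicator (fun _ => ENNReal.ofReal (exp (-k))) ω :=
        ENNReal.le_tsum (f := fun k : ℕ => (s k).indicator _ ω) _
  calc ∫⁻ ω, ENNReal.ofReal (exp (-g ω)) ∂μ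
      ≤ ∫⁻ ω, ∑' k : ℕ, (s k).indicator (fun _ => ENNReal.ofReal (exp (-k))) ω ∂μ :=
        lintegral_mono hle
    _ = ∑' k : ℕ, ENNReal.ofReal (exp (-k)) * μ (s k) := by
        rw [lintegral_tsum fun k => (measurable_const.indicator (hs k)).aemeasurable]
        simp_rw [lintegral_indicator_const (hs _)]

lemma lintegral_exp_neg_sq_div_sq_le {X : Ω → ℝ} {C ε₀ ε : ℝ} (hX : Measurable X)
    (hX0 : ∀ ω, 0 ≤ X ω) (hC : 0 ≤ C)
    (hsmall : ∀ t, ε₀ ≤ t → μ {ω | X ω < t} ≤ ENNReal.ofReal (C * t ^ 2))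
    (hε : ε₀ ≤ ε) (hε_pos : 0 < ε) :
    ∫⁻ ω, ENNReal.ofReal (exp (-(X ω ^ 2 / ε ^ 2))) ∂μ ≤ ENNReal.ofReal (4 * C * ε ^ 2) := by
  have hlevel : ∀ k : ℕ, μ {ω | X ω ^ 2 / ε ^ 2 < k + 1}
      ≤ ENNReal.ofReal (C * ε ^ 2 * ((k : ℝ) + 1)) := fun k => by
    have hk : (1 : ℝ) ≤ √((k : ℝ) + 1) := one_le_sqrt.2 (by simp)
    have hsq : (ε * √((k : ℝ) + 1)) ^ 2 = ε ^ 2 * ((k : ℝ) + 1) := by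
      rw [mul_pow, sq_sqrt (by positivity)]
    have hsub : {ω | X ω ^ 2 / ε ^ 2 < k + 1} ⊆ {ω | X ω < ε * √((k : ℝ) + 1)} := fun ω hω => by
      rw [Set.mem_ofPred_eq, div_lt_iff₀ (by positivity)] at hω
      rw [Set.mem_ofPred_eq, ← pow_lt_pow_iff_left₀ (hX0 ω) (by positivity) two_ne_zero, hsq]
      linarith
    calc μ {ω | X ω ^ 2 / ε ^ 2 < k + 1} ≤ μ {ω | X ω < ε * √((k : ℝ) + 1)} := measure_mono hsub
      _ ≤ ENNReal.ofReal (C * ε ^ 2 * ((k : ℝ) + 1)) := by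
        rw [mul_assoc, ← hsq]
        exact hsmall _ (by nlinarith)
  have hsum := (hasSum_add_one_mul_exp_neg.summable.mul_left (C * ε ^ 2))
  calc ∫⁻ ω, ENNReal.ofReal (exp (-(X ω ^ 2 / ε ^ 2))) ∂μ
      ≤ ∑' k : ℕ, ENNReal.ofReal (exp (-k)) * μ {ω | X ω ^ 2 / ε ^ 2 < k + 1} :=
        lintegral_exp_neg_le_tsum_measure_lt (by fun_prop) fun ω => by positivity
    _ ≤ ∑' k : ℕ, ENNReal.ofReal (C * ε ^ 2 * (((k : ℝ) + 1) * exp (-k))) := by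
        gcongr with k
        rw [← mul_assoc, mul_comm _ (exp _), ENNReal.ofReal_mul (exp_nonneg _)]
        gcongr
        exact hlevel k
    _ = ENNReal.ofReal (C * ε ^ 2 * ∑' k : ℕ, ((k : ℝ) + 1) * exp (-k)) := by
        rw [← tsum_mul_left, ENNReal.ofReal_tsum_of_nonneg (fun k => by positivity) hsum]
    _ ≤ ENNReal.ofReal (4 * C * ε ^ 2) := by
        refine ENNReal.ofReal_le_ofReal ?_
        nlinarith [mul_le_mul_of_nonneg_left tsum_add_one_mul_exp_neg_le
          (by positivity : 0 ≤ C * ε ^ 2)]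

lemma mgf_sq_div_sq_neg_one_le {X : Ω → ℝ} {C ε₀ ε : ℝ} (hX : Measurable X)
    (hX0 : ∀ ω, 0 ≤ X ω) (hC : 0 ≤ C)
    (hsmall : ∀ t, ε₀ ≤ t → μ {ω | X ω < t} ≤ ENNReal.ofReal (C * t ^ 2))
    (hε : ε₀ ≤ ε) (hε_pos : 0 < ε) :
    mgf (fun ω => X ω ^ 2 / ε ^ 2) μ (-1) ≤ 4 * C * ε ^ 2 := by
  simp only [mgf, neg_one_mul]
  rw [integral_eq_lintegral_of_nonneg_ae (.of_forall fun ω => (exp_pos _).le) (by fun_prop)]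
  exact ENNReal.toReal_le_of_le_ofReal (by positivity)
    (lintegral_exp_neg_sq_div_sq_le hX hX0 hC hsmall hε hε_pos)

lemma ProbabilityTheory.iIndepFun.measureReal_sum_le_le_exp_mul_prod_mgf {ι : Type*} [Fintype ι]
    {X : ι → Ω → ℝ} (hind : iIndepFun X μ) (hX : ∀ i, Measurable (X i))
    (hX0 : ∀ i ω, 0 ≤ X i ω) {t : ℝ} (ht : t ≤ 0) (a : ℝ) :
    μ.real {ω | ∑ i, X i ω ≤ a} ≤ exp (-t * a) * ∏ i, mgf (X i) μ t := by
  have := hind.isProbabilityMeasure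
  have hint : Integrable (fun ω => exp (t * (∑ i, X i) ω)) μ := by
    refine .of_bound (by fun_prop) 1 (.of_forall fun ω => ?_)
    rw [norm_of_nonneg (exp_pos _).le, exp_le_one_iff, Finset.sum_apply]
    exact mul_nonpos_of_nonpos_of_nonneg ht (sum_nonneg fun i _ => hX0 i ω)
  simpa [hind.mgf_sum hX] using measure_le_le_exp_mul_mgf a ht hint

/-- tensorization: if `ξ_1, …, ξ_m` are independent nonnegative
random variables with `P(ξ_j < ε) ≤ C ε²` for all `ε ≥ ε₀`, then there is `C'`
depending only on `C` with `P(∑ ξ_j² < ε² m) ≤ (C' ε)^{2m}` for all `ε ≥ ε₀`. -/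
theorem stmt11 (C : ℝ) (hC : 0 < C) :
    ∃ C' : ℝ, 0 < C' ∧
      ∀ (ε₀ : ℝ), 0 < ε₀ →
      ∀ (Ω : Type) (_ : MeasurableSpace Ω) (μ : Measure Ω), IsProbabilityMeasure μ →
      ∀ (m : ℕ) (ξ : Fin m → Ω → ℝ),
        (∀ j, Measurable (ξ j)) →
        (∀ j ω, 0 ≤ ξ j ω) →
        iIndepFun ξ μ →
        (∀ j, ∀ ε : ℝ, ε₀ ≤ ε → μ {ω | ξ j ω < ε} ≤ ENNReal.ofReal (C * ε ^ 2)) →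
        ∀ ε : ℝ, ε₀ ≤ ε →
          μ {ω | ∑ j, ξ j ω ^ 2 < ε ^ 2 * m} ≤ ENNReal.ofReal ((C' * ε) ^ (2 * m)) := by
  refine ⟨√(4 * exp 1 * C), by positivity, ?_⟩
  intro ε₀ hε₀ Ω _ μ _ m ξ hξ hξ0 hind hsmall ε hε
  have hε_pos : 0 < ε := hε₀.trans_le hε
  set X : Fin m → Ω → ℝ := fun j ω => ξ j ω ^ 2 / ε ^ 2
  have hsub : {ω | ∑ j, ξ j ω ^ 2 < ε ^ 2 * m} ⊆ {ω | ∑ j, X j ω ≤ m} := fun ω hω => by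
    rw [Set.mem_ofPred_eq, ← sum_div, div_le_iff₀ (by positivity)]
    exact (mul_comm (ε ^ 2) m ▸ hω).le
  have hchernoff := (hind.comp (fun _ x => x ^ 2 / ε ^ 2) fun _ => by fun_prop)
    |>.measureReal_sum_le_le_exp_mul_prod_mgf (X := X) (fun j => by fun_prop)
      (fun j ω => by positivity) (t := -1) (by norm_num) m
  have hprod : ∏ j, mgf (X j) μ (-1) ≤ (4 * C * ε ^ 2) ^ m := by
    calc ∏ j, mgf (X j) μ (-1) ≤ ∏ _j : Fin m, 4 * C * ε ^ 2 :=
          prod_le_prod (fun _ _ => mgf_nonneg)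
            fun j _ => mgf_sq_div_sq_neg_one_le (hξ j) (hξ0 j) hC.le (hsmall j) hε hε_pos
      _ = (4 * C * ε ^ 2) ^ m := by simp
  calc μ {ω | ∑ j, ξ j ω ^ 2 < ε ^ 2 * m}
      ≤ ENNReal.ofReal (μ.real {ω | ∑ j, X j ω ≤ m}) := by
        rw [ofReal_measureReal]; exact measure_mono hsub
    _ ≤ ENNReal.ofReal (exp m * (4 * C * ε ^ 2) ^ m) := by
        gcongr
        exact hchernoff.trans (by simpa using mul_le_mul_of_nonneg_left hprod (exp_pos m).le)
    _ = ENNReal.ofReal ((√(4 * exp 1 * C) * ε) ^ (2 * m)) := by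
        rw [pow_mul, mul_pow √_, sq_sqrt (by positivity), ← exp_one_pow, ← mul_pow]
        ring_nf
end

section
/- Let θ, θ' in R² with ||θ||_2 ≥ D and ||θ − θ'||_2 ≤ r, and let v, v' in C^n with ||[v]^T θ − p||_2 < α and [v']^T θ' = p for some p in Z^{2n}, with ||v'||_2 ≤ (α+2D)/D. If r = Dα/(α+2D) and ||v||_2 = 1, then ||v − v'||_2 ≤ 2α/D. -/
/-!
The two rows of `[w]` are orthogonal of length `‖w‖`, so `‖[w]ᵀθ‖ = ‖w‖ ‖θ‖`. Hence
`‖v - v'‖ ‖θ‖ = ‖[v]ᵀθ - [v']ᵀθ‖ ≤ ‖[v]ᵀθ - p‖ + ‖[v']ᵀ(θ' - θ)‖ < α + ‖v'‖ r ≤ 2α`,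
while `‖θ‖ ≥ D`.
-/

open Finset Matrix

lemma vmat_sub {n : ℕ} (v w : Fin n → ℂ) : vmat (v - w) = vmat v - vmat w := by
  ext i (j | j) <;> fin_cases i <;> simp [vmat, sub_eq_add_neg, add_comm]

lemma sum_sq_vmat_transpose_mulVec {n : ℕ} (w : Fin n → ℂ) (θ : Fin 2 → ℝ) :
    ∑ k, ((vmat w)ᵀ *ᵥ θ) k ^ 2 = (∑ j, ‖w j‖ ^ 2) * ∑ i, θ i ^ 2 := by
  simp only [mulVec, transpose_apply, dotProduct, Fin.sum_univ_two, vmat, of_apply,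
    Fintype.sum_sum_type, Sum.elim_inl, Sum.elim_inr, Complex.sq_norm, Complex.normSq_apply,
    ← sum_add_distrib, sum_mul]
  refine sum_congr rfl fun j _ => ?_
  simp only [Fin.isValue, ↓reduceIte, Fin.one_eq_zero_iff, OfNat.ofNat_ne_one]
  ring

lemma sqrt_sum_sq_vmat_transpose_mulVec {n : ℕ} (w : Fin n → ℂ) (θ : Fin 2 → ℝ) :
    √(∑ k, ((vmat w)ᵀ *ᵥ θ) k ^ 2) = √(∑ j, ‖w j‖ ^ 2) * √(∑ i, θ i ^ 2) := by
  rw [sum_sq_vmat_transpose_mulVec, Real.sqrt_mul (sum_nonneg fun j _ => sq_nonneg _)]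

lemma sqrt_sum_sq_sub_eq_dist {ι : Type*} [Fintype ι] (a b : ι → ℝ) :
    √(∑ k, (a k - b k) ^ 2) = dist (WithLp.toLp 2 a) (WithLp.toLp 2 b) := by
  simp [EuclideanSpace.dist_eq, Real.dist_eq, sq_abs]

lemma sqrt_sum_sq_sub_le_add {ι : Type*} [Fintype ι] (a b c : ι → ℝ) :
    √(∑ k, (a k - c k) ^ 2) ≤ √(∑ k, (a k - b k) ^ 2) + √(∑ k, (b k - c k) ^ 2) := by
  simp only [sqrt_sum_sq_sub_eq_dist]
  exact dist_triangle _ _ _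

theorem stmt15_general (n : ℕ) (θ θ' : Fin 2 → ℝ) (v v' : Fin n → ℂ)
    (p : Fin n ⊕ Fin n → ℤ) (α D r : ℝ) (hα : 0 < α) (hD : 0 < D)
    (hθD : D ≤ Real.sqrt (∑ i, θ i ^ 2))
    (hθθ' : Real.sqrt (∑ i, (θ i - θ' i) ^ 2) ≤ r)
    (happ : Real.sqrt (∑ k, ((vmat v)ᵀ.mulVec θ k - (p k : ℝ)) ^ 2) < α)
    (hexact : ∀ k, (vmat v')ᵀ.mulVec θ' k = (p k : ℝ))
    (hv' : Real.sqrt (∑ j, ‖v' j‖ ^ 2) ≤ (α + 2 * D) / D)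
    (hr : r = D * α / (α + 2 * D)) :
    Real.sqrt (∑ j, ‖v j - v' j‖ ^ 2) ≤ 2 * α / D := by
  have hexact_err : √(∑ k, ((p k : ℝ) - ((vmat v')ᵀ *ᵥ θ) k) ^ 2) ≤ α :=
    calc √(∑ k, ((p k : ℝ) - ((vmat v')ᵀ *ᵥ θ) k) ^ 2)
        = √(∑ k, ((vmat v')ᵀ *ᵥ (θ' - θ)) k ^ 2) := by
          simp only [mulVec_sub, Pi.sub_apply, hexact]
      _ = √(∑ j, ‖v' j‖ ^ 2) * √(∑ i, (θ i - θ' i) ^ 2) := by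
          rw [sqrt_sum_sq_vmat_transpose_mulVec]
          simp only [Pi.sub_apply, ← neg_sub (θ _), neg_sq]
      _ ≤ (α + 2 * D) / D * r := by gcongr
      _ = α := by rw [hr]; field_simp
  have hdiff : √(∑ j, ‖v j - v' j‖ ^ 2) * √(∑ i, θ i ^ 2) ≤ 2 * α :=
    calc √(∑ j, ‖v j - v' j‖ ^ 2) * √(∑ i, θ i ^ 2)
        = √(∑ k, (((vmat v)ᵀ *ᵥ θ) k - ((vmat v')ᵀ *ᵥ θ) k) ^ 2) := by
          simpa only [vmat_sub, transpose_sub, sub_mulVec, Pi.sub_apply] using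
            (sqrt_sum_sq_vmat_transpose_mulVec (v - v') θ).symm
      _ ≤ √(∑ k, (((vmat v)ᵀ *ᵥ θ) k - p k) ^ 2)
            + √(∑ k, ((p k : ℝ) - ((vmat v')ᵀ *ᵥ θ) k) ^ 2) :=
          sqrt_sum_sq_sub_le_add _ _ _
      _ ≤ 2 * α := by linarith
  rw [le_div_iff₀ hD]
  exact (mul_le_mul_of_nonneg_left hθD (Real.sqrt_nonneg _)).trans hdiff

/-- if `‖θ‖₂ ≥ D`, `‖θ − θ'‖₂ ≤ r`, `‖[v]ᵀθ − p‖₂ < α`,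
`[v']ᵀθ' = p`, `‖v'‖₂ ≤ (α+2D)/D`, `r = Dα/(α+2D)` and `‖v‖₂ = 1`, then
`‖v − v'‖₂ ≤ 2α/D`. -/
theorem stmt15 (n : ℕ) (θ θ' : Fin 2 → ℝ) (v v' : Fin n → ℂ)
    (p : Fin n ⊕ Fin n → ℤ) (α D r : ℝ) (hα : 0 < α) (hD : 0 < D)
    (hθD : D ≤ Real.sqrt (∑ i, θ i ^ 2))
    (hθθ' : Real.sqrt (∑ i, (θ i - θ' i) ^ 2) ≤ r)
    (happ : Real.sqrt (∑ k, ((vmat v)ᵀ.mulVec θ k - (p k : ℝ)) ^ 2) < α)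
    (hexact : ∀ k, (vmat v')ᵀ.mulVec θ' k = (p k : ℝ))
    (hv' : Real.sqrt (∑ j, ‖v' j‖ ^ 2) ≤ (α + 2 * D) / D)
    (hr : r = D * α / (α + 2 * D))
    (hv : Real.sqrt (∑ j, ‖v j‖ ^ 2) = 1) :
    Real.sqrt (∑ j, ‖v j - v' j‖ ^ 2) ≤ 2 * α / D :=
  stmt15_general n θ θ' v v' p α D r hα hD hθD hθθ' happ hexact hv' hr
end
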